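/- arXiv:1106.3059 — 3 statements merged into one kernel-verified Lean document; each statement's English description precedes it below -/
import Mathlib

section
/- (Kraft inequality / algorithmic probability is at most 1) If S is a prefix-free set of boolean strings, then ∑'_{p ∈ S} (1/2)^{p.length} ≤ 1. Consequently, for any partial computable F : List Bool →. ℕ whose domain is prefix-free, the algorithmic probability satisfies m_F(s) ≤ 1 for every s : ℕ. -/
/-! Fix `n` at least the length of every word of a finite prefix-free set `T`. A word `p ∈ T`
has `2 ^ (n - |p|)` extensions of length `n`, and prefix-freeness makes these extension sets
pairwise disjoint, so `∑ p ∈ T, 2 ^ (n - |p|) ≤ 2 ^ n`; dividing by `2 ^ n` gives Kraft's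
inequality for `T`. An infinite sum of nonnegative terms is the supremum of its finite partial
sums, and a subset of a prefix-free set is prefix-free. -/

/-- A set of boolean strings is prefix-free if no element is a proper prefix
of another element. -/
def PrefixFree (S : Set (List Bool)) : Prop :=
  ∀ p ∈ S, ∀ q ∈ S, p <+: q → p = q

/-- The algorithmic probability of `s` under the machine `F`: the sum of
`(1/2)^{p.length}` over all programs `p` with `F p = Part.some s`. -/
noncomputable def algProb (F : List Bool →. ℕ) (s : ℕ) : ℝ :=
  ∑' p : {p : List Bool // F p = Part.some s}, ((1 : ℝ) / 2) ^ (p : List Bool).length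

open Finset

theorem PrefixFree.mono {S T : Set (List Bool)} (h : S ⊆ T) (hT : PrefixFree T) :
    PrefixFree S :=
  fun p hp q hq hpq => hT p (h hp) q (h hq) hpq

/-- The words of length `max n |p|` having `p` as a prefix. -/
def extensionsOfLength (n : ℕ) (p : List Bool) : Finset (List Bool) :=
  (univ : Finset (Fin (n - p.length) → Bool)).image (fun f => p ++ List.ofFn f)

theorem card_extensionsOfLength (n : ℕ) (p : List Bool) :
    #(extensionsOfLength n p) = 2 ^ (n - p.length) := by
  rw [extensionsOfLength, card_image_of_injective _
    fun f g h => List.ofFn_injective (List.append_cancel_left h)]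
  simp

theorem mem_extensionsOfLength {n : ℕ} {p l : List Bool} (hp : p.length ≤ n) :
    l ∈ extensionsOfLength n p ↔ p <+: l ∧ l.length = n := by
  simp only [extensionsOfLength, mem_image, mem_univ, true_and]
  constructor
  · rintro ⟨f, rfl⟩
    exact ⟨List.prefix_append p _, by simp; omega⟩
  · rintro ⟨⟨q, rfl⟩, hl⟩
    have hq : q.length = n - p.length := by simp at hl; omega
    exact ⟨fun i => q.get (i.cast hq.symm), by simp [List.ofFn_congr hq.symm]⟩

theorem disjoint_extensionsOfLength {n : ℕ} {p q : List Bool} (hp : p.length ≤ n)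
    (hq : q.length ≤ n) (hpq : ¬p <+: q) (hqp : ¬q <+: p) :
    Disjoint (extensionsOfLength n p) (extensionsOfLength n q) := by
  refine disjoint_left.mpr fun l hlp hlq => ?_
  rw [mem_extensionsOfLength hp] at hlp
  rw [mem_extensionsOfLength hq] at hlq
  rcases List.prefix_or_prefix_of_prefix hlp.1 hlq.1 with h | h
  exacts [hpq h, hqp h]

theorem PrefixFree.sum_two_pow_sub_length_le {T : Finset (List Bool)}
    (hT : PrefixFree (T : Set (List Bool))) {n : ℕ} (hn : ∀ p ∈ T, p.length ≤ n) :
    ∑ p ∈ T, 2 ^ (n - p.length) ≤ 2 ^ n := by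
  have hdisj : (T : Set (List Bool)).PairwiseDisjoint (extensionsOfLength n) :=
    fun p hp q hq hne => disjoint_extensionsOfLength (hn p hp) (hn q hq)
      (fun h => hne (hT p hp q hq h)) (fun h => hne (hT q hq p hp h).symm)
  have hsub : T.biUnion (extensionsOfLength n) ⊆ extensionsOfLength n [] := by
    intro l hl
    obtain ⟨p, hp, hl⟩ := mem_biUnion.mp hl
    rw [mem_extensionsOfLength (hn p hp)] at hl
    rw [mem_extensionsOfLength (Nat.zero_le n)]
    exact ⟨List.nil_prefix, hl.2⟩
  calc ∑ p ∈ T, 2 ^ (n - p.length) = #(T.biUnion (extensionsOfLength n)) := by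
        simp only [card_biUnion hdisj, card_extensionsOfLength]
    _ ≤ #(extensionsOfLength n []) := card_le_card hsub
    _ = 2 ^ n := card_extensionsOfLength n []

theorem PrefixFree.sum_half_pow_length_le_one {T : Finset (List Bool)}
    (hT : PrefixFree (T : Set (List Bool))) :
    ∑ p ∈ T, ((1 : ℝ) / 2) ^ p.length ≤ 1 := by
  set n := T.sup List.length
  have hn : ∀ p ∈ T, p.length ≤ n := fun p hp => le_sup hp
  have hterm : ∀ p ∈ T, ((1 : ℝ) / 2) ^ p.length = 2 ^ (n - p.length) / 2 ^ n := by
    intro p hp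
    rw [pow_sub₀ _ two_ne_zero (hn p hp), one_div_pow]
    field_simp
  rw [sum_congr rfl hterm, ← sum_div, div_le_one (by positivity)]
  exact_mod_cast hT.sum_two_pow_sub_length_le hn

theorem PrefixFree.tsum_half_pow_length_le_one {S : Set (List Bool)} (hS : PrefixFree S) :
    ∑' p : S, ((1 : ℝ) / 2) ^ (p : List Bool).length ≤ 1 := by
  refine Real.tsum_le_of_sum_le (fun _ => by positivity) fun F => ?_
  refine (sum_map F (Function.Embedding.subtype (· ∈ S))
    fun p => ((1 : ℝ) / 2) ^ p.length).symm.trans_le ?_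
  refine PrefixFree.sum_half_pow_length_le_one (hS.mono fun p hp => ?_)
  obtain ⟨⟨q, hq⟩, -, rfl⟩ := mem_map.mp hp
  exact hq

/-- Kraft inequality: a prefix-free set of boolean strings satisfies
`∑ (1/2)^{length} ≤ 1`; consequently the algorithmic probability of any
machine with prefix-free domain is at most `1`. -/
theorem kraft_inequality :
    (∀ S : Set (List Bool), PrefixFree S →
      (∑' p : S, ((1 : ℝ) / 2) ^ (p : List Bool).length) ≤ 1) ∧
    (∀ F : List Bool →. ℕ, Partrec F → PrefixFree {p : List Bool | (F p).Dom} →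
      ∀ s : ℕ, algProb F s ≤ 1) := by
  refine ⟨fun S hS => hS.tsum_half_pow_length_le_one, fun F _ hdom s => ?_⟩
  have hfiber : {p | F p = Part.some s} ⊆ {p | (F p).Dom} := fun p hp => by
    simp_all
  exact (hdom.mono hfiber).tsum_half_pow_length_le_one
end

section
/- (Champernowne) The base-10 Champernowne sequence is normal in base 10: for every nonempty list w of elements of Fin 10, the number of indices i < N at which the block of consecutive terms d(i), d(i+1), …, d(i + w.length − 1) equals w, divided by N, tends to (1/10)^{w.length} as N → ∞. In particular, there exists a computable sequence generated by a simple rule that is normal. -/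
/-- The concatenation of the base-10 digit strings (most significant digit
first) of the integers `1, 2, …, n`. -/
def champPrefix (n : ℕ) : List (Fin 10) :=
  (List.range n).flatMap (fun k => ((Nat.digits 10 (k + 1)).reverse).map (fun d => Fin.ofNat 10 d))

/-- The base-10 Champernowne sequence `0.123456789101112…`, as a function
`ℕ → Fin 10`.  Each of the first `i+1` integers contributes at least one digit,
so the prefix `champPrefix (i+1)` already contains position `i`. -/
def champernowne (i : ℕ) : Fin 10 :=
  (champPrefix (i + 1)).getD i 0

/-- `d` is normal in base `b`: every nonempty block `w` occurs with limiting
frequency `(1/b)^{w.length}`. -/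
def IsNormal (b : ℕ) (d : ℕ → Fin b) : Prop :=
  ∀ w : List (Fin b), w ≠ [] →
    Filter.Tendsto
      (fun N : ℕ =>
        (((Finset.range N).filter
          (fun i => List.ofFn (fun j : Fin w.length => d (i + (j : ℕ))) = w)).card : ℝ) / N)
      Filter.atTop (nhds (((1 : ℝ) / b) ^ w.length))

/-!
Let `k = w.length`, let `c < 10 ^ k` be the number spelled by `w`, and let `ℓ(m)` be the number of
decimal digits of `m`. Inside the decimal string of a single integer `m`, `w` occurs ending `j`
digits before the last digit exactly when `j + k ≤ ℓ(m)` and `m / 10 ^ j ≡ c [MOD 10 ^ k]`, and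
among `1, …, n` this happens for `n / 10 ^ k + O(10 ^ j)` integers. Summing over `j < ℓ(n)` gives
`ℓ(n) n / 10 ^ k + O(n)` occurrences inside the strings of `1, …, n`; occurrences straddling two
consecutive strings add at most `k n`. These strings fill a prefix of length `ℓ(n) n + O(n)`, so
`w` occurs there `(length of the prefix) / 10 ^ k + O(n)` times. As `ℓ(n) → ∞` the error is
negligible, and a general `N` lies within `O(n)` of the end of such a prefix.
-/

open Finset Filter Topology

theorem card_filter_range_le_card_filter_add {p q : ℕ → Prop} [DecidablePred p]
    [DecidablePred q] {n t : ℕ} (h : ∀ i < n, i + t ≤ n → p i → q i) :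
    #{i ∈ range n | p i} ≤ #{i ∈ range n | q i} + t := by
  calc #{i ∈ range n | p i} ≤ #({i ∈ range n | q i} ∪ Ico (n - t) n) := by
        refine card_le_card fun i hi => ?_
        simp only [mem_filter, mem_range, mem_union, mem_Ico] at hi ⊢
        by_cases hfit : i + t ≤ n
        · exact .inl ⟨hi.1, h i hi.1 hfit hi.2⟩
        · exact .inr ⟨by omega, hi.1⟩
    _ ≤ #{i ∈ range n | q i} + t := (card_union_le _ _).trans (by simp; omega)

section Occurrences

variable {α : Type*}

theorem add_length_le_of_isPrefix_drop {w L : List α} {p : ℕ} (h : w <+: L.drop p)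
    (hp : p ≤ L.length) : p + w.length ≤ L.length := by
  have := h.length_le
  simp only [List.length_drop] at this
  omega

theorem isPrefix_drop_append_iff (w : List α) {X Y : List α} {p : ℕ}
    (h : p + w.length ≤ X.length) : w <+: (X ++ Y).drop p ↔ w <+: X.drop p := by
  rw [List.drop_append_of_le_length (by omega), List.prefix_iff_eq_take, List.prefix_iff_eq_take,
    List.take_append_of_le_length (by simp; omega)]

theorem isPrefix_reverse_drop_reverse {w L : List α} {p : ℕ} (h : w <+: L.drop p)
    (hp : p ≤ L.length) : w.reverse <+: L.reverse.drop (L.length - w.length - p) := by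
  have hfit := add_length_le_of_isPrefix_drop h hp
  rw [List.drop_reverse, List.reverse_prefix, List.suffix_iff_eq_drop, List.length_take,
    List.drop_take]
  conv_lhs => rw [List.prefix_iff_eq_take.1 h]
  congr 2 <;> omega

variable [DecidableEq α]

def occurrenceCount (w L : List α) : ℕ := #{p ∈ range L.length | w <+: L.drop p}

variable (w : List α)

theorem occurrenceCount_append (X Y : List α) :
    occurrenceCount w (X ++ Y) =
      #{p ∈ range X.length | w <+: (X ++ Y).drop p} + occurrenceCount w Y := by
  rw [occurrenceCount, List.length_append, range_add, filter_union, card_union_of_disjoint,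
    filter_map, card_map]
  · simp [occurrenceCount, List.drop_length_add_append]
  · exact disjoint_filter_filter (by simp [disjoint_left]; omega)

theorem occurrenceCount_add_le_occurrenceCount_append (X Y : List α) :
    occurrenceCount w X + occurrenceCount w Y ≤ occurrenceCount w (X ++ Y) := by
  rw [occurrenceCount_append]
  gcongr
  refine card_le_card (monotone_filter_right _ fun p hp h => h.trans ?_)
  simp [List.drop_append_of_le_length (mem_range.1 hp).le]

theorem occurrenceCount_append_le (X Y : List α) :
    occurrenceCount w (X ++ Y) ≤ occurrenceCount w X + occurrenceCount w Y + w.length := by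
  rw [occurrenceCount_append, add_right_comm]
  gcongr
  exact card_filter_range_le_card_filter_add fun p _ hfit => (isPrefix_drop_append_iff w hfit).1

theorem occurrenceCount_reverse {w : List α} (hw : w ≠ []) (L : List α) :
    occurrenceCount w.reverse L.reverse = occurrenceCount w L := by
  have hk : 0 < w.length := List.length_pos_iff.2 hw
  have hfit {L w : List α} {p : ℕ} (hp : p ∈ {p ∈ range L.length | w <+: L.drop p}) :
      p + w.length ≤ L.length :=
    add_length_le_of_isPrefix_drop (mem_filter.1 hp).2 (mem_range.1 (mem_filter.1 hp).1).le
  symm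
  refine card_nbij' (fun p => L.length - w.length - p) (fun p => L.length - w.length - p)
    (fun p hp => ?_) (fun p hp => ?_) (fun p hp => ?_) (fun p hp => ?_)
  · simp only [coe_filter, mem_range, Set.mem_ofPred_eq] at hp ⊢
    exact ⟨by simp; omega, isPrefix_reverse_drop_reverse hp.2 hp.1.le⟩
  · simp only [coe_filter, mem_range, Set.mem_ofPred_eq, List.length_reverse] at hp ⊢
    have := isPrefix_reverse_drop_reverse hp.2 (by simp; omega)
    simp only [List.reverse_reverse, List.length_reverse] at this
    exact ⟨by omega, this⟩
  · have := hfit hp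
    dsimp only
    omega
  · have := hfit hp
    simp only [List.length_reverse] at this ⊢
    omega

theorem occurrenceCount_map {β : Type*} [DecidableEq β] {f : α → β} (hf : f.Injective)
    (L : List α) : occurrenceCount (w.map f) (L.map f) = occurrenceCount w L := by
  simp only [occurrenceCount, List.length_map, ← List.map_drop,
    List.prefix_map_iff_of_injective hf]

end Occurrences

section BlockCount

variable {α : Type*}

theorem ofFn_eq_iff_isPrefix_drop {d : ℕ → α} (w : List α) {L : List α}
    (hL : ∀ i (h : i < L.length), d i = L[i]) {i : ℕ} (hi : i + w.length ≤ L.length) :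
    List.ofFn (fun j : Fin w.length => d (i + j)) = w ↔ w <+: L.drop i := by
  suffices List.ofFn (fun j : Fin w.length => d (i + j)) = (L.drop i).take w.length by
    rw [this, List.prefix_iff_eq_take, eq_comm]
  refine List.ext_getElem (by simp; omega) fun j hj _ => ?_
  simp only [List.length_ofFn] at hj
  simp [hL (i + j) (by omega)]

variable [DecidableEq α]

def blockCount (d : ℕ → α) (w : List α) (N : ℕ) : ℕ :=
  #{i ∈ range N | List.ofFn (fun j : Fin w.length => d (i + j)) = w}

variable (d : ℕ → α) (w : List α)

theorem blockCount_mono : Monotone (blockCount d w) := fun _ _ h =>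
  card_le_card (filter_subset_filter _ (range_subset_range.2 h))

theorem blockCount_add_le (N t : ℕ) : blockCount d w (N + t) ≤ blockCount d w N + t := by
  rw [blockCount, range_add, filter_union]
  exact (card_union_le _ _).trans (add_le_add_right ((card_filter_le _ _).trans (by simp)) _)

variable {d} {L : List α} (hL : ∀ i (h : i < L.length), d i = L[i])
include hL

theorem occurrenceCount_le_blockCount : occurrenceCount w L ≤ blockCount d w L.length :=
  card_le_card <| monotone_filter_right _ fun _ hi h =>
    (ofFn_eq_iff_isPrefix_drop w hL (add_length_le_of_isPrefix_drop h (mem_range.1 hi).le)).2 h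

theorem blockCount_le_occurrenceCount :
    blockCount d w L.length ≤ occurrenceCount w L + w.length :=
  card_filter_range_le_card_filter_add fun _ _ hfit => (ofFn_eq_iff_isPrefix_drop w hL hfit).1

end BlockCount

section Digits

theorem eq_div_mul_add_div_mod_mul_add_mod (m E P : ℕ) :
    m = m / (E * P) * (E * P) + m / E % P * E + m % E := by
  have h := Nat.div_add_mod m (E * P)
  rw [Nat.mod_mul] at h
  linarith

theorem card_filter_div_mod_eq_le {E : ℕ} (hE : 0 < E) (P c n : ℕ) :
    #{m ∈ Icc 1 n | m / E % P = c} ≤ n / P + E := by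
  calc #{m ∈ Icc 1 n | m / E % P = c} ≤ #(range (n / (E * P) + 1) ×ˢ range E) := by
        refine card_le_card_of_injOn (fun m => (m / (E * P), m % E)) (fun m hm => ?_)
          fun m₁ hm₁ m₂ hm₂ h => ?_
        · simp only [coe_filter, mem_Icc, Set.mem_ofPred_eq] at hm
          simp only [coe_product, coe_range, Set.mem_prod, Set.mem_Iio]
          exact ⟨Nat.lt_succ_of_le (Nat.div_le_div_right hm.1.2), Nat.mod_lt _ hE⟩
        · simp only [coe_filter, Set.mem_ofPred_eq, Prod.mk.injEq] at hm₁ hm₂ h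
          rw [eq_div_mul_add_div_mod_mul_add_mod m₁ E P, eq_div_mul_add_div_mod_mul_add_mod m₂ E P,
            hm₁.2, hm₂.2, h.1, h.2]
    _ = n / (E * P) * E + E := by simp [add_mul]
    _ ≤ n / P + E := by
        rw [mul_comm E, ← Nat.div_div_eq_div_mul]
        gcongr
        exact Nat.div_mul_le_self _ _

theorem le_card_filter_div_mod_eq {E : ℕ} (hE : 0 < E) {P c : ℕ} (hc : c < P) (n : ℕ) :
    n / P ≤ #{m ∈ Icc (E * P) n | m / E % P = c} + 2 * E := by
  have hdiv (a r : ℕ) (hr : r < E) : ((a * P + c) * E + r) / E = a * P + c := by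
    rw [add_comm, Nat.add_mul_div_right _ _ hE, Nat.div_eq_of_lt hr, zero_add]
  have hmod (a r : ℕ) (hr : r < E) : ((a * P + c) * E + r) % E = r := by
    rw [add_comm, Nat.add_mul_mod_self_right, Nat.mod_eq_of_lt hr]
  have hcoeff (a : ℕ) : (a * P + c) % P = c ∧ (a * P + c) / P = a := by
    rw [add_comm, Nat.add_mul_mod_self_right, Nat.mod_eq_of_lt hc,
      Nat.add_mul_div_right _ _ (by omega), Nat.div_eq_of_lt hc, zero_add]
    exact ⟨rfl, rfl⟩
  have hcount : #(Ico 1 (n / (E * P)) ×ˢ range E) ≤ #{m ∈ Icc (E * P) n | m / E % P = c} := by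
    refine card_le_card_of_injOn (fun ar => (ar.1 * P + c) * E + ar.2) (fun ⟨a, r⟩ har => ?_)
      fun ar₁ har₁ ar₂ har₂ h => ?_
    · simp only [coe_product, coe_Ico, coe_range, Set.mem_prod, Set.mem_Ico, Set.mem_Iio] at har
      simp only [coe_filter, mem_Icc, Set.mem_ofPred_eq, hdiv _ _ har.2, (hcoeff _).1, and_true]
      obtain ⟨⟨ha₁, haQ⟩, hr⟩ := har
      constructor
      · calc E * P ≤ a * P * E := by nlinarith [Nat.mul_le_mul_right (P * E) ha₁]
          _ ≤ (a * P + c) * E + r := by nlinarith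
      · calc (a * P + c) * E + r ≤ (a + 1) * (E * P) := by nlinarith
          _ ≤ n / (E * P) * (E * P) := Nat.mul_le_mul_right _ haQ
          _ ≤ n := Nat.div_mul_le_self _ _
    · simp only [coe_product, coe_Ico, coe_range, Set.mem_prod, Set.mem_Ico,
        Set.mem_Iio] at har₁ har₂
      have h1 := congrArg (· / E / P) h
      have h2 := congrArg (· % E) h
      simp only [hdiv _ _ har₁.2, hdiv _ _ har₂.2, hmod _ _ har₁.2, hmod _ _ har₂.2,
        (hcoeff _).2] at h1 h2
      exact Prod.ext h1 h2
  have hsplit : n / P < n / (E * P) * E + E := by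
    rw [mul_comm E, ← Nat.div_div_eq_div_mul]
    exact Nat.lt_div_mul_add hE
  rw [card_product, Nat.card_Ico, card_range] at hcount
  have hpred : n / (E * P) * E ≤ (n / (E * P) - 1) * E + E := by
    rw [Nat.sub_mul, one_mul]
    omega
  omega

end Digits

section DigitWindows

def digitWindowCount (b j k c n : ℕ) : ℕ :=
  #{m ∈ Icc 1 n | j + k ≤ (b.digits m).length ∧ m / b ^ j % b ^ k = c}

variable {b : ℕ} (hb : 1 < b)
include hb

theorem take_drop_digits_eq_iff {u : List ℕ} (hu : ∀ x ∈ u, x < b) (hu₀ : u ≠ []) (m j : ℕ) :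
    ((b.digits m).drop j).take u.length = u ↔
      j + u.length ≤ (b.digits m).length ∧ m / b ^ j % b ^ u.length = Nat.ofDigits b u := by
  have hwindow :
      m / b ^ j % b ^ u.length = Nat.ofDigits b (((b.digits m).drop j).take u.length) := by
    rw [Nat.self_div_pow_eq_ofDigits_drop _ _ hb, Nat.ofDigits_mod_pow_eq_ofDigits_take _
      (by omega) _ fun x hx => Nat.digits_lt_base hb (List.mem_of_mem_drop hx)]
  have hk : 0 < u.length := List.length_pos_iff.2 hu₀
  rw [hwindow]
  constructor
  · intro h
    have hlen := congrArg List.length h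
    simp only [List.length_take, List.length_drop] at hlen
    exact ⟨by omega, by rw [h]⟩
  · rintro ⟨hfit, hval⟩
    refine Nat.ofDigits_inj_of_len_eq hb (by simp; omega) (fun x hx => ?_) hu hval
    exact Nat.digits_lt_base hb (List.mem_of_mem_drop (List.mem_of_mem_take hx))

theorem occurrenceCount_digits {u : List ℕ} (hu : ∀ x ∈ u, x < b) (hu₀ : u ≠ []) {m R : ℕ}
    (hR : (b.digits m).length ≤ R) :
    occurrenceCount u (b.digits m) =
      #{j ∈ range R | j + u.length ≤ (b.digits m).length ∧
        m / b ^ j % b ^ u.length = Nat.ofDigits b u} := by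
  have hk : 0 < u.length := List.length_pos_iff.2 hu₀
  unfold occurrenceCount
  congr 1
  ext j
  simp only [mem_filter, mem_range, List.prefix_iff_eq_take, eq_comm (a := u),
    take_drop_digits_eq_iff hb hu hu₀]
  constructor <;> rintro ⟨hj, hfit, hval⟩ <;> exact ⟨by omega, hfit, hval⟩

theorem digitWindowCount_le (j k c n : ℕ) : digitWindowCount b j k c n ≤ n / b ^ k + b ^ j :=
  (card_le_card (monotone_filter_right _ fun _ _ h => h.2)).trans
    (card_filter_div_mod_eq_le (by positivity) _ _ _)

theorem le_digitWindowCount {k c : ℕ} (hc : c < b ^ k) (j n : ℕ) :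
    n / b ^ k ≤ digitWindowCount b j k c n + 2 * b ^ j := by
  refine (le_card_filter_div_mod_eq (E := b ^ j) (by positivity) hc n).trans
    (add_le_add_left ?_ _)
  refine card_le_card fun m hm => ?_
  simp only [mem_filter, mem_Icc] at hm ⊢
  have hpos : 1 ≤ b ^ j * b ^ k := Nat.one_le_iff_ne_zero.2 (by positivity)
  refine ⟨⟨by omega, hm.1.2⟩, ?_, hm.2⟩
  have := (Nat.lt_digits_length_iff hb m).2 (by rw [pow_add]; exact hm.1.1)
  omega

end DigitWindows

section DigitLengths

variable {b : ℕ} (hb : 1 < b)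
include hb

theorem sum_pow_lt_base_mul {n : ℕ} (hn : n ≠ 0) :
    ∑ j ∈ range (b.digits n).length, b ^ j < b * n :=
  (Nat.geomSum_lt hb fun _ hj => mem_range.1 hj).trans_le
    (Nat.base_pow_length_digits_le b n hb hn)

theorem length_digits_le_base_mul (n : ℕ) : (b.digits n).length ≤ b * n := by
  rcases eq_or_ne n 0 with rfl | hn
  · simp
  exact (Nat.lt_pow_self hb).le.trans (Nat.base_pow_length_digits_le b n hb hn)

theorem sum_length_digits_sub_le (n : ℕ) :
    ∑ m ∈ Icc 1 n, ((b.digits n).length - (b.digits m).length) ≤ b * n := by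
  rcases Nat.eq_zero_or_pos n with rfl | hn
  · simp
  set ℓ := (b.digits n).length
  have hlayer (m : ℕ) : ℓ - (b.digits m).length = #{t ∈ range ℓ | (b.digits m).length ≤ t} := by
    rw [← Nat.card_Ico]
    congr 1
    ext t
    simp only [mem_Ico, mem_filter, mem_range]
    omega
  have hcount (t : ℕ) : #{m ∈ Icc 1 n | (b.digits m).length ≤ t} ≤ b ^ t := by
    calc #{m ∈ Icc 1 n | (b.digits m).length ≤ t} ≤ #(range (b ^ t)) :=
          card_le_card fun m hm =>
            mem_range.2 ((Nat.digits_length_le_iff hb m).1 (mem_filter.1 hm).2)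
      _ = b ^ t := card_range _
  calc ∑ m ∈ Icc 1 n, (ℓ - (b.digits m).length)
      = ∑ t ∈ range ℓ, #{m ∈ Icc 1 n | (b.digits m).length ≤ t} := by
        simp only [hlayer, card_filter]
        exact sum_comm
    _ ≤ ∑ t ∈ range ℓ, b ^ t := sum_le_sum fun t _ => hcount t
    _ ≤ b * n := (sum_pow_lt_base_mul hb hn.ne').le

theorem length_digits_mul_le (n : ℕ) :
    (b.digits n).length * n ≤ ∑ m ∈ Icc 1 n, (b.digits m).length + b * n := by
  calc (b.digits n).length * n = ∑ m ∈ Icc 1 n, (b.digits n).length := by simp [mul_comm]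
    _ = ∑ m ∈ Icc 1 n,
          ((b.digits m).length + ((b.digits n).length - (b.digits m).length)) := by
        refine sum_congr rfl fun m hm => ?_
        have := Nat.le_length_digits_le b m n (mem_Icc.1 hm).2
        omega
    _ ≤ ∑ m ∈ Icc 1 n, (b.digits m).length + b * n := by
        rw [sum_add_distrib]
        exact Nat.add_le_add_left (sum_length_digits_sub_le hb n) _

end DigitLengths

section Champernowne

def decimalString (m : ℕ) : List (Fin 10) :=
  ((Nat.digits 10 m).reverse).map (fun d => Fin.ofNat 10 d)

/-- The value of the numeral `w`, most significant digit first; `w` may have leading zeros. -/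
def decimalValue (w : List (Fin 10)) : ℕ := Nat.ofDigits 10 (w.reverse.map Fin.val)

theorem decimalValue_lt (w : List (Fin 10)) : decimalValue w < 10 ^ w.length := by
  unfold decimalValue
  simpa using Nat.ofDigits_lt_base_pow_length (b := 10) (l := w.reverse.map Fin.val) (by norm_num)
    (by simp)

theorem map_val_decimalString (m : ℕ) :
    (decimalString m).map Fin.val = (Nat.digits 10 m).reverse := by
  rw [decimalString, List.map_map]
  refine (List.map_congr_left fun d hd => ?_).trans (List.map_id _)
  simp [Nat.mod_eq_of_lt (Nat.digits_lt_base (by norm_num) (List.mem_reverse.1 hd))]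

theorem occurrenceCount_decimalString {w : List (Fin 10)} (hw : w ≠ []) {m R : ℕ}
    (hR : (Nat.digits 10 m).length ≤ R) :
    occurrenceCount w (decimalString m) =
      #{j ∈ range R | j + w.length ≤ (Nat.digits 10 m).length ∧
        m / 10 ^ j % 10 ^ w.length = decimalValue w} := by
  rw [← occurrenceCount_map w Fin.val_injective, map_val_decimalString,
    ← List.reverse_reverse (w.map Fin.val), occurrenceCount_reverse (by simpa using hw),
    occurrenceCount_digits (by norm_num) (by simp) (by simpa using hw) hR]
  simp [decimalValue, List.map_reverse]

theorem champPrefix_succ (n : ℕ) :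
    champPrefix (n + 1) = champPrefix n ++ decimalString (n + 1) := by
  simp [champPrefix, decimalString, List.range_succ, List.flatMap_append]

theorem length_champPrefix (n : ℕ) :
    (champPrefix n).length = ∑ m ∈ Icc 1 n, (Nat.digits 10 m).length := by
  induction n with
  | zero => rfl
  | succ n ih =>
    rw [champPrefix_succ, List.length_append, ih, sum_Icc_succ_top (by omega)]
    simp [decimalString]

theorem le_length_champPrefix (n : ℕ) : n ≤ (champPrefix n).length := by
  rw [length_champPrefix]
  calc n = ∑ m ∈ Icc 1 n, 1 := by simp
    _ ≤ _ := sum_le_sum fun m hm => List.length_pos_iff.2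
        (Nat.digits_ne_nil_iff_ne_zero.2 (Nat.one_le_iff_ne_zero.1 (mem_Icc.1 hm).1))

theorem champPrefix_isPrefix {n n' : ℕ} (h : n ≤ n') : champPrefix n <+: champPrefix n' := by
  induction n', h using Nat.le_induction with
  | base => exact List.prefix_refl _
  | succ n' _ ih => exact ih.trans (champPrefix_succ n' ▸ List.prefix_append _ _)

theorem champernowne_eq_getElem {n i : ℕ} (h : i < (champPrefix n).length) :
    champernowne i = (champPrefix n)[i] := by
  have hi : i < (champPrefix (i + 1)).length := (le_length_champPrefix _).trans_lt' (by omega)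
  rw [champernowne, List.getD_eq_getElem _ _ hi]
  rcases le_total n (i + 1) with hn | hn
  · exact ((champPrefix_isPrefix hn).getElem h).symm
  · exact (champPrefix_isPrefix hn).getElem hi

end Champernowne

section Frequencies

variable (w : List (Fin 10))

theorem sum_occurrenceCount_decimalString_le (n : ℕ) :
    ∑ m ∈ Icc 1 n, occurrenceCount w (decimalString m) ≤ occurrenceCount w (champPrefix n) := by
  induction n with
  | zero => simp
  | succ n ih =>
    rw [champPrefix_succ, sum_Icc_succ_top (by omega)]
    exact (Nat.add_le_add_right ih _).trans (occurrenceCount_add_le_occurrenceCount_append w _ _)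

theorem occurrenceCount_champPrefix_le (n : ℕ) :
    occurrenceCount w (champPrefix n) ≤
      ∑ m ∈ Icc 1 n, occurrenceCount w (decimalString m) + n * w.length := by
  induction n with
  | zero => simp [occurrenceCount, champPrefix]
  | succ n ih =>
    rw [champPrefix_succ, sum_Icc_succ_top (by omega)]
    refine (occurrenceCount_append_le w _ _).trans ?_
    rw [add_one_mul]
    omega

theorem sum_occurrenceCount_decimalString {w : List (Fin 10)} (hw : w ≠ []) (n : ℕ) :
    ∑ m ∈ Icc 1 n, occurrenceCount w (decimalString m) =
      ∑ j ∈ range (Nat.digits 10 n).length, digitWindowCount 10 j w.length (decimalValue w) n := by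
  rw [sum_congr rfl fun m hm =>
    occurrenceCount_decimalString hw (Nat.le_length_digits_le 10 m n (mem_Icc.1 hm).2)]
  simp only [digitWindowCount, card_filter]
  exact sum_comm

end Frequencies

section Estimates

variable {w : List (Fin 10)} (hw : w ≠ []) {n : ℕ} (hn : n ≠ 0)
include hw hn

theorem sum_occurrenceCount_decimalString_le_length_mul :
    ∑ m ∈ Icc 1 n, occurrenceCount w (decimalString m) ≤
      (Nat.digits 10 n).length * (n / 10 ^ w.length) + 10 * n := by
  rw [sum_occurrenceCount_decimalString hw]
  calc _ ≤ ∑ j ∈ range (Nat.digits 10 n).length, (n / 10 ^ w.length + 10 ^ j) :=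
        sum_le_sum fun j _ => digitWindowCount_le (by norm_num) _ _ _ _
    _ ≤ _ := by
        rw [sum_add_distrib, sum_const, card_range, smul_eq_mul]
        exact Nat.add_le_add_left (sum_pow_lt_base_mul (by norm_num) hn).le _

theorem length_mul_le_sum_occurrenceCount_decimalString :
    (Nat.digits 10 n).length * (n / 10 ^ w.length) ≤
      ∑ m ∈ Icc 1 n, occurrenceCount w (decimalString m) + 20 * n := by
  rw [sum_occurrenceCount_decimalString hw]
  calc _ = ∑ j ∈ range (Nat.digits 10 n).length, n / 10 ^ w.length := by simp
    _ ≤ ∑ j ∈ range (Nat.digits 10 n).length,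
          (digitWindowCount 10 j w.length (decimalValue w) n + 2 * 10 ^ j) :=
        sum_le_sum fun j _ => le_digitWindowCount (by norm_num) (decimalValue_lt w) _ _
    _ ≤ _ := by
        rw [sum_add_distrib, ← mul_sum]
        have := sum_pow_lt_base_mul (by norm_num : 1 < 10) hn
        omega

theorem pow_mul_occurrenceCount_champPrefix_le :
    10 ^ w.length * occurrenceCount w (champPrefix n) ≤
      (champPrefix n).length + (w.length + 20) * 10 ^ w.length * n := by
  set P := 10 ^ w.length
  set ℓ := (Nat.digits 10 n).length
  have hocc : occurrenceCount w (champPrefix n) ≤ ℓ * (n / P) + 10 * n + n * w.length :=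
    (occurrenceCount_champPrefix_le w n).trans
      (Nat.add_le_add_right (sum_occurrenceCount_decimalString_le_length_mul hw hn) _)
  have hℓ : ℓ * n ≤ (champPrefix n).length + 10 * n := by
    rw [length_champPrefix]; exact length_digits_mul_le (by norm_num) n
  have hP : P * (n / P) ≤ n := Nat.mul_div_le n P
  have hP₁ : 1 ≤ P := Nat.one_le_pow _ _ (by norm_num)
  calc P * occurrenceCount w (champPrefix n) ≤ P * (ℓ * (n / P) + 10 * n + n * w.length) :=
        Nat.mul_le_mul_left _ hocc
    _ ≤ _ := by nlinarith

theorem length_champPrefix_le_pow_mul_occurrenceCount :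
    (champPrefix n).length ≤
      10 ^ w.length * occurrenceCount w (champPrefix n) + 30 * 10 ^ w.length * n := by
  set P := 10 ^ w.length
  set ℓ := (Nat.digits 10 n).length
  have hocc : ℓ * (n / P) ≤ occurrenceCount w (champPrefix n) + 20 * n :=
    (length_mul_le_sum_occurrenceCount_decimalString hw hn).trans
      (Nat.add_le_add_right (sum_occurrenceCount_decimalString_le w n) _)
  have hℓ : (champPrefix n).length ≤ ℓ * n := by
    rw [length_champPrefix]
    calc _ ≤ ∑ m ∈ Icc 1 n, ℓ :=
          sum_le_sum fun m hm => Nat.le_length_digits_le 10 m n (mem_Icc.1 hm).2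
      _ = ℓ * n := by simp [mul_comm]
  have hP : n ≤ P * (n / P) + P := by
    have := Nat.lt_div_mul_add (a := n) (Nat.pos_of_ne_zero (by positivity : P ≠ 0))
    linarith
  have hℓn : ℓ ≤ 10 * n := length_digits_le_base_mul (by norm_num) n
  calc (champPrefix n).length ≤ ℓ * (P * (n / P) + P) := hℓ.trans (Nat.mul_le_mul_left _ hP)
    _ ≤ _ := by nlinarith

end Estimates

section Limit

def champIndex (N : ℕ) : ℕ := Nat.findGreatest (fun n => (champPrefix n).length ≤ N) N

theorem length_champPrefix_champIndex_le (N : ℕ) : (champPrefix (champIndex N)).length ≤ N :=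
  Nat.findGreatest_spec (P := fun n => (champPrefix n).length ≤ N) (Nat.zero_le N)
    (by simp [champPrefix])

theorem lt_length_champPrefix_champIndex_succ (N : ℕ) :
    N < (champPrefix (champIndex N + 1)).length := by
  by_contra! h
  exact Nat.findGreatest_is_greatest (Nat.lt_succ_self _) ((le_length_champPrefix _).trans h) h

theorem le_champIndex {n N : ℕ} (h : (champPrefix n).length ≤ N) : n ≤ champIndex N :=
  Nat.le_findGreatest ((le_length_champPrefix n).trans h) h

theorem tendsto_champIndex : Tendsto champIndex atTop atTop :=
  tendsto_atTop_atTop.2 fun n => ⟨(champPrefix n).length, fun _ => le_champIndex⟩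

theorem tendsto_length_digits {b : ℕ} (hb : 1 < b) :
    Tendsto (fun n => (b.digits n).length) atTop atTop :=
  tendsto_atTop_atTop.2 fun t => ⟨b ^ t, fun n hn => ((Nat.lt_digits_length_iff hb n).2 hn).le⟩

theorem tendsto_length_champPrefix_div :
    Tendsto (fun n => ((champPrefix n).length : ℝ) / n) atTop atTop := by
  have hℓ : Tendsto (fun n => ((Nat.digits 10 n).length : ℝ) - 10) atTop atTop :=
    tendsto_atTop_add_const_right _ _
      (tendsto_natCast_atTop_atTop.comp (tendsto_length_digits (by norm_num)))
  refine tendsto_atTop_mono' _ ?_ hℓ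
  filter_upwards [eventually_gt_atTop 0] with n hn
  rw [le_div_iff₀ (by exact_mod_cast hn), sub_mul]
  have h := length_digits_mul_le (b := 10) (by norm_num) n
  rw [← length_champPrefix] at h
  have h' : ((Nat.digits 10 n).length * n : ℝ) ≤ (champPrefix n).length + 10 * n := by
    exact_mod_cast h
  linarith

theorem tendsto_champIndex_div : Tendsto (fun N => (champIndex N : ℝ) / N) atTop (𝓝 0) := by
  have h := (tendsto_length_champPrefix_div.inv_tendsto_atTop).comp tendsto_champIndex
  refine squeeze_zero' (Eventually.of_forall fun N => by positivity) ?_ h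
  filter_upwards [eventually_gt_atTop 0] with N hN
  simp only [Function.comp_apply, Pi.inv_apply, inv_div]
  rcases Nat.eq_zero_or_pos (champIndex N) with h0 | h0
  · simp [h0]
  gcongr
  · exact_mod_cast (Nat.zero_lt_of_lt (le_length_champPrefix _ |>.trans_lt' h0))
  · exact_mod_cast length_champPrefix_champIndex_le N

theorem champIndex_ne_zero {N : ℕ} (hN : N ≠ 0) : champIndex N ≠ 0 :=
  Nat.one_le_iff_ne_zero.1 (le_champIndex (by simp [champPrefix]; omega))

theorem sub_length_champPrefix_champIndex_le {N : ℕ} (hN : N ≠ 0) :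
    N - (champPrefix (champIndex N)).length ≤ 20 * champIndex N := by
  have h := lt_length_champPrefix_champIndex_succ N
  rw [champPrefix_succ, List.length_append] at h
  simp only [decimalString, List.length_map, List.length_reverse] at h
  have := length_digits_le_base_mul (b := 10) (by norm_num) (champIndex N + 1)
  have := champIndex_ne_zero hN
  omega

theorem pow_mul_blockCount_champernowne_le {w : List (Fin 10)} (hw : w ≠ []) {n N : ℕ}
    (hn : n ≠ 0) (hLN : (champPrefix n).length ≤ N)
    (hgap : N - (champPrefix n).length ≤ 20 * n) :
    10 ^ w.length * blockCount champernowne w N ≤ N + (2 * w.length + 40) * 10 ^ w.length * n ∧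
      N ≤ 10 ^ w.length * blockCount champernowne w N + 50 * 10 ^ w.length * n := by
  have hseq : ∀ i (h : i < (champPrefix n).length), champernowne i = (champPrefix n)[i] :=
    fun _ h => champernowne_eq_getElem h
  have hocc_le := occurrenceCount_le_blockCount w hseq
  have hle_occ := blockCount_le_occurrenceCount w hseq
  have hmono := blockCount_mono champernowne w hLN
  have htail := blockCount_add_le champernowne w (champPrefix n).length
    (N - (champPrefix n).length)
  rw [Nat.add_sub_cancel' hLN] at htail
  have hupper := pow_mul_occurrenceCount_champPrefix_le hw hn
  have hlower := length_champPrefix_le_pow_mul_occurrenceCount hw hn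
  have hP : 1 ≤ 10 ^ w.length := Nat.one_le_pow _ _ (by norm_num)
  have hk : 10 ^ w.length * w.length ≤ 10 ^ w.length * w.length * n :=
    Nat.le_mul_of_pos_right _ (Nat.pos_of_ne_zero hn)
  have hgap' := Nat.mul_le_mul_left (10 ^ w.length) hgap
  have hocc_le' := Nat.mul_le_mul_left (10 ^ w.length) (hocc_le.trans hmono)
  have hnP : n ≤ 10 ^ w.length * n := Nat.le_mul_of_pos_left n hP
  constructor
  · nlinarith
  · have : N ≤ (champPrefix n).length + 20 * n := by omega
    nlinarith

theorem abs_div_sub_inv_le {x N P e : ℝ} (hN : 0 < N) (hP : 0 < P) (h : |P * x - N| ≤ P * e) :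
    |x / N - P⁻¹| ≤ e / N := by
  rw [show x / N - P⁻¹ = (P * x - N) / (P * N) by field_simp, abs_div,
    abs_of_pos (mul_pos hP hN), div_le_div_iff₀ (mul_pos hP hN) hN]
  nlinarith

theorem tendsto_blockCount_champernowne_div {w : List (Fin 10)} (hw : w ≠ []) :
    Tendsto (fun N => (blockCount champernowne w N : ℝ) / N) atTop
      (𝓝 ((1 / 10) ^ w.length)) := by
  rw [one_div, inv_pow, ← tendsto_sub_nhds_zero_iff]
  refine squeeze_zero_norm' ?_
    (by simpa using tendsto_champIndex_div.const_mul (2 * w.length + 50 : ℝ))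
  filter_upwards [eventually_ne_atTop 0] with N hN
  obtain ⟨hupper, hlower⟩ := pow_mul_blockCount_champernowne_le hw (champIndex_ne_zero hN)
    (length_champPrefix_champIndex_le N) (sub_length_champPrefix_champIndex_le hN)
  have hupper' := (Nat.cast_le (α := ℝ)).2 hupper
  have hlower' := (Nat.cast_le (α := ℝ)).2 hlower
  push_cast at hupper' hlower'
  rw [Real.norm_eq_abs, ← mul_div_assoc]
  refine abs_div_sub_inv_le (P := 10 ^ w.length) (Nat.cast_pos.2 (Nat.pos_of_ne_zero hN))
    (by positivity) (abs_le.2 ⟨?_, ?_⟩) <;> nlinarith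

end Limit

/-- Champernowne's theorem: the base-10 Champernowne sequence is normal in base 10. -/
theorem champernowne_normal : IsNormal 10 champernowne := fun _ hw => by
  simpa [blockCount] using tendsto_blockCount_champernowne_div hw
end

section
/- If a sequence d : ℕ → Fin b (b ≥ 2) is normal in base b, then for every gap k : ℕ and every pair of symbols a₁ a₂ : Fin b, the pairs of outcomes separated by k positions are uniformly distributed: the number of indices i < N with d(i) = a₁ and d(i + k + 1) = a₂, divided by N, tends to 1/b² as N → ∞. -/
/-!
Splitting the occurrences of the pair `(a₁, a₂)` at distance `k + 1` according to the `k`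
letters between them writes its count as a sum of `b ^ k` counts of blocks of length `k + 2`.
By normality each of these has frequency `b ^ -(k + 2)`, so the pair has frequency
`b ^ k * b ^ -(k + 2) = b ^ -2`.
-/

open Finset Filter Topology

theorem IsNormal.tendsto_card_block {b : ℕ} {d : ℕ → Fin b} (hd : IsNormal b d) {n : ℕ}
    (hn : n ≠ 0) (g : Fin n → Fin b) :
    Tendsto (fun N : ℕ => (#{i ∈ range N | ∀ j : Fin n, d (i + j) = g j} : ℝ) / N)
      atTop (𝓝 ((1 / b : ℝ) ^ n)) := by
  simpa [funext_iff] using hd (List.ofFn g) (by simpa using hn)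

def gapBlock {α : Type*} {k : ℕ} (a₁ a₂ : α) (f : Fin k → α) : Fin (k + 2) → α :=
  Fin.cons a₁ (Fin.snoc f a₂)

theorem forall_eq_gapBlock_iff {α : Type*} (d : ℕ → α) (i k : ℕ) (a₁ a₂ : α)
    (f : Fin k → α) :
    (∀ j : Fin (k + 2), d (i + j) = gapBlock a₁ a₂ f j) ↔
      (d i = a₁ ∧ d (i + k + 1) = a₂) ∧ (fun t : Fin k => d (i + 1 + t)) = f := by
  simp only [gapBlock, Fin.forall_fin_succ (n := k + 1), Fin.forall_fin_succ' (n := k),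
    Fin.cons_zero, Fin.cons_succ, Fin.snoc_castSucc, Fin.snoc_last, Fin.val_zero, Fin.val_succ,
    Fin.val_castSucc, Fin.val_last, funext_iff, add_zero, ← add_assoc, add_right_comm _ 1]
  tauto

theorem card_filter_gap_pair_eq_sum {α : Type*} [Fintype α] [DecidableEq α] (d : ℕ → α)
    (k N : ℕ) (a₁ a₂ : α) :
    #{i ∈ range N | d i = a₁ ∧ d (i + k + 1) = a₂} =
      ∑ f : Fin k → α,
        #{i ∈ range N | ∀ j : Fin (k + 2), d (i + j) = gapBlock a₁ a₂ f j} := by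
  rw [card_eq_sum_card_fiberwise (f := fun i (t : Fin k) => d (i + 1 + t)) (t := univ)
    (fun _ _ => mem_univ _)]
  simp only [filter_filter, forall_eq_gapBlock_iff]

theorem normal_gap_pairs_uniform_general {b : ℕ} (d : ℕ → Fin b)
    (hd : IsNormal b d) (k : ℕ) (a₁ a₂ : Fin b) :
    Filter.Tendsto
      (fun N : ℕ =>
        (((Finset.range N).filter
          (fun i => d i = a₁ ∧ d (i + k + 1) = a₂)).card : ℝ) / N)
      Filter.atTop (nhds (1 / (b : ℝ) ^ 2)) := by
  have hb : (b : ℝ) ≠ 0 := Nat.cast_ne_zero.mpr (Fin.pos a₁).ne'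
  have hblocks := tendsto_finsetSum univ fun (f : Fin k → Fin b) _ =>
    hd.tendsto_card_block (k + 1).succ_ne_zero (gapBlock a₁ a₂ f)
  have hlimit : ∑ _f : Fin k → Fin b, (1 / b : ℝ) ^ (k + 2) = 1 / (b : ℝ) ^ 2 := by
    rw [sum_const, card_univ, Fintype.card_fun, Fintype.card_fin, Fintype.card_fin,
      nsmul_eq_mul, Nat.cast_pow, pow_add, ← mul_assoc, ← mul_pow, mul_one_div_cancel hb,
      one_pow, one_mul, one_div_pow]
  rw [← hlimit]
  refine hblocks.congr fun N => ?_
  rw [← sum_div, card_filter_gap_pair_eq_sum, Nat.cast_sum]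

/-- In a normal sequence, pairs of outcomes separated by a gap of `k` positions
are uniformly distributed: each pair `(a₁, a₂)` occurs with limiting
frequency `1/b²`. -/
theorem normal_gap_pairs_uniform {b : ℕ} (hb : 2 ≤ b) (d : ℕ → Fin b)
    (hd : IsNormal b d) (k : ℕ) (a₁ a₂ : Fin b) :
    Filter.Tendsto
      (fun N : ℕ =>
        (((Finset.range N).filter
          (fun i => d i = a₁ ∧ d (i + k + 1) = a₂)).card : ℝ) / N)
      Filter.atTop (nhds (1 / (b : ℝ) ^ 2)) :=
  normal_gap_pairs_uniform_general d hd k a₁ a₂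
end
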